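/- Let z₁,…,zₙ ∈ ℍ₊, let f have a Stieltjes spectral representation with constant γ ≥ 0 and measure σ, and set w_j = f(z_j), ‖σ‖ = ∫_{[0,∞)} (1+t)⁻¹ dσ(t). Define M(ζ) = sup_{t ≥ 0} |(t+1)/(t − ζ)| and m(ζ) = min{1/|ζ|, 1} for ζ ∈ ℍ₊, and set c(z) = min_{1≤j≤n} 1/M(z_j) and C(z) = min_{1≤j≤n} |z_j + 1|/(m(z_j)·Im(z_j)). Then c(z)·max_{1≤j≤n} |w_j| ≤ γ + ‖σ‖ ≤ C(z)·max_{1≤j≤n} |w_j|. -/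

import Mathlib

open Complex MeasureTheory Polynomial Matrix
open scoped ComplexConjugate

noncomputable section

/-- The cut `[0, ∞)` viewed as a subset of `ℂ`. -/
def SCut : Set ℂ := {z : ℂ | 0 ≤ z.re ∧ z.im = 0}

/-- The slit domain `ℂ \ [0, ∞)`. -/
def SDom : Set ℂ := {z : ℂ | ¬ (0 ≤ z.re ∧ z.im = 0)}

/-- The Stieltjes class `𝔖`: functions analytic on `ℂ \ [0,∞)` that are either
nonnegative real constants or satisfy (i) `Im f(z) > 0` on the upper half-plane,
(ii) `f(x) > 0` for real `x < 0`, (iii) `conj (f z) = f (conj z)`. -/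
def StieltjesClass (f : ℂ → ℂ) : Prop :=
  AnalyticOnNhd ℂ f SDom ∧
  ((∃ c : ℝ, 0 ≤ c ∧ ∀ z ∈ SDom, f z = (c : ℂ)) ∨
    ((∀ z : ℂ, 0 < z.im → 0 < (f z).im) ∧
     (∀ x : ℝ, x < 0 → ∃ r : ℝ, 0 < r ∧ f (x : ℂ) = (r : ℂ)) ∧
     (∀ z ∈ SDom, conj (f z) = f (conj z))))

/-- `f` has a Stieltjes spectral representation with constant `γ ≥ 0` and positive Borel
measure `σ` supported on `[0,∞)` with `∫ (1+t)⁻¹ dσ < ∞`. -/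
def IsStieltjesRep (f : ℂ → ℂ) (γ : ℝ) (σ : Measure ℝ) : Prop :=
  0 ≤ γ ∧ σ (Set.Iio 0) = 0 ∧
  (∫⁻ t, ENNReal.ofReal ((1 + t)⁻¹) ∂σ) < ⊤ ∧
  ∀ z ∈ SDom, f z = (γ : ℂ) + ∫ t, ((t : ℂ) - z)⁻¹ ∂σ

/-- `‖σ‖ = ∫ (1+t)⁻¹ dσ(t)` as a real number. -/
def stieltjesTotal (σ : Measure ℝ) : ℝ :=
  (∫⁻ t, ENNReal.ofReal ((1 + t)⁻¹) ∂σ).toReal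

namespace Stielt14


lemma ae_nonneg {σ : Measure ℝ} (h0 : σ (Set.Iio 0) = 0) : ∀ᵐ t ∂σ, (0:ℝ) ≤ t := by
  rw [ae_iff]
  have h : {t : ℝ | ¬ (0:ℝ) ≤ t} = Set.Iio 0 := by ext t; simp
  rw [h]; exact h0

lemma sub_ne (z : ℂ) (hz : 0 < z.im) (t : ℝ) : (t:ℂ) - z ≠ 0 := by
  intro h
  have h2 : ((t:ℂ) - z).im = 0 := by rw [h]; simp
  simp [Complex.sub_im] at h2
  linarith

lemma abs_sub_ge (z : ℂ) (hz : 0 < z.im) (t : ℝ) : z.im ≤ ‖(t:ℂ) - z‖ := by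
  have h1 : |((t:ℂ) - z).im| ≤ ‖(t:ℂ) - z‖ := Complex.abs_im_le_norm _
  have h2 : ((t:ℂ) - z).im = -z.im := by simp [Complex.sub_im]
  rw [h2, abs_neg, abs_of_pos hz] at h1
  exact h1

lemma one_add_le (z : ℂ) (hz : 0 < z.im) (t : ℝ) (ht : 0 ≤ t) :
    1 + t ≤ ‖(t:ℂ) - z‖ + ‖z + 1‖ := by
  have h1 : ((t:ℂ) + 1) = ((t:ℂ) - z) + (z + 1) := by ring
  have h2 : ‖(t:ℂ) + 1‖ ≤ ‖(t:ℂ) - z‖ + ‖z + 1‖ := by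
    rw [h1]; exact norm_add_le _ _
  have h3 : ‖(t:ℂ) + 1‖ = 1 + t := by
    have h4 : ((t:ℂ) + 1) = ((t + 1 : ℝ) : ℂ) := by push_cast; ring
    rw [h4, Complex.norm_real, Real.norm_eq_abs, _root_.abs_of_nonneg (by linarith)]
    ring
  linarith

lemma inv_abs_le (z : ℂ) (hz : 0 < z.im) (t : ℝ) (ht : 0 ≤ t) :
    (‖(t:ℂ) - z‖)⁻¹ ≤ (1 + ‖z + 1‖ / z.im) * (1 + t)⁻¹ := by
  set D := ‖(t:ℂ) - z‖ with hDdef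
  set K := 1 + ‖z + 1‖ / z.im with hKdef
  have hD : 0 < D := lt_of_lt_of_le hz (abs_sub_ge z hz t)
  have h1t : (0:ℝ) < 1 + t := by linarith
  have hy := abs_sub_ge z hz t
  have h := one_add_le z hz t ht
  have habs : 0 ≤ ‖z + 1‖ := norm_nonneg _
  have hK : 0 < K := by
    have : 0 ≤ ‖z + 1‖ / z.im := div_nonneg habs hz.le
    rw [hKdef]; linarith
  have e1 : z.im * (‖z + 1‖ / z.im) = ‖z + 1‖ :=
    mul_div_cancel₀ _ (ne_of_gt hz)
  have e2 : 0 ≤ (D - z.im) * (‖z + 1‖ / z.im) :=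
    mul_nonneg (by linarith) (div_nonneg habs hz.le)
  have hmain : (1 + t) / K ≤ D := by
    rw [div_le_iff₀ hK, hKdef]
    nlinarith
  calc D⁻¹ ≤ ((1 + t) / K)⁻¹ := by
        apply inv_anti₀ (by positivity) hmain
    _ = K * (1 + t)⁻¹ := by rw [inv_div]; ring



section Integrab

variable {σ : Measure ℝ}

lemma integrable_inv_one_add (h0 : σ (Set.Iio 0) = 0)
    (hL : (∫⁻ t, ENNReal.ofReal ((1 + t)⁻¹) ∂σ) < ⊤) :
    Integrable (fun t : ℝ => (1 + t)⁻¹) σ := by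
  refine ⟨(Measurable.inv (measurable_const.add measurable_id)).aestronglyMeasurable, ?_⟩
  rw [hasFiniteIntegral_iff_ofReal ?_]
  · exact hL
  · filter_upwards [ae_nonneg h0] with t ht
    positivity

lemma integral_inv_one_add (h0 : σ (Set.Iio 0) = 0) :
    (∫ t, (1 + t)⁻¹ ∂σ) = stieltjesTotal σ := by
  rw [integral_eq_lintegral_of_nonneg_ae ?_ ?_]
  · rfl
  · filter_upwards [ae_nonneg h0] with t ht; positivity
  · exact (Measurable.inv (measurable_const.add measurable_id)).aestronglyMeasurable

lemma stieltjesTotal_nonneg (σ : Measure ℝ) : 0 ≤ stieltjesTotal σ := ENNReal.toReal_nonneg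

lemma integrable_g (h0 : σ (Set.Iio 0) = 0)
    (hL : (∫⁻ t, ENNReal.ofReal ((1 + t)⁻¹) ∂σ) < ⊤) (z : ℂ) (hz : 0 < z.im) :
    Integrable (fun t : ℝ => ((t:ℂ) - z)⁻¹) σ := by
  have hc : Continuous (fun t : ℝ => ((t:ℂ) - z)⁻¹) := by
    apply Continuous.inv₀
    · exact (Complex.continuous_ofReal.sub continuous_const)
    · exact fun t => sub_ne z hz t
  refine ((integrable_inv_one_add h0 hL).const_mul
    (1 + ‖z + 1‖ / z.im)).mono' hc.aestronglyMeasurable ?_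
  filter_upwards [ae_nonneg h0] with t ht
  rw [norm_inv]
  exact inv_abs_le z hz t ht

end Integrab

section Key

variable {σ : Measure ℝ}

lemma sup_bddAbove (z : ℂ) (hz : 0 < z.im) :
    BddAbove (Set.range fun t : Set.Ici (0:ℝ) =>
      ‖(((t : ℝ) : ℂ) + 1) / (((t : ℝ) : ℂ) - z)‖) := by
  refine ⟨1 + ‖z + 1‖ / z.im, ?_⟩
  rintro x ⟨⟨t, ht⟩, rfl⟩
  have ht' : (0:ℝ) ≤ t := ht
  dsimp only
  have hD : 0 < ‖(t:ℂ) - z‖ := lt_of_lt_of_le hz (abs_sub_ge z hz t)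
  have habs : ‖((t:ℝ):ℂ) + 1‖ = 1 + t := by
    have h4 : ((t:ℂ) + 1) = ((t + 1 : ℝ) : ℂ) := by push_cast; ring
    rw [h4, Complex.norm_real, Real.norm_eq_abs, _root_.abs_of_nonneg (by linarith)]; ring
  rw [norm_div, habs]
  have h1t : (0:ℝ) < 1 + t := by linarith
  have h := inv_abs_le z hz t ht
  calc (1 + t) / ‖(t:ℂ) - z‖ = (1 + t) * (‖(t:ℂ) - z‖)⁻¹ := by
        rw [div_eq_mul_inv]
    _ ≤ (1 + t) * ((1 + ‖z + 1‖ / z.im) * (1 + t)⁻¹) :=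
        mul_le_mul_of_nonneg_left h h1t.le
    _ = 1 + ‖z + 1‖ / z.im := by field_simp

lemma le_sup (z : ℂ) (hz : 0 < z.im) (t : ℝ) (ht : 0 ≤ t) :
    ‖(((t : ℝ) : ℂ) + 1) / (((t : ℝ) : ℂ) - z)‖ ≤
      ⨆ t : Set.Ici (0:ℝ), ‖(((t : ℝ) : ℂ) + 1) / (((t : ℝ) : ℂ) - z)‖ :=
  le_ciSup (sup_bddAbove z hz) (⟨t, ht⟩ : Set.Ici (0:ℝ))

lemma sup_nonneg (z : ℂ) (hz : 0 < z.im) :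
    0 ≤ ⨆ t : Set.Ici (0:ℝ), ‖(((t : ℝ) : ℂ) + 1) / (((t : ℝ) : ℂ) - z)‖ :=
  le_trans (norm_nonneg _) (le_sup z hz 0 le_rfl)

lemma one_le_sup (z : ℂ) (hz : 0 < z.im) :
    1 ≤ ⨆ t : Set.Ici (0:ℝ), ‖(((t : ℝ) : ℂ) + 1) / (((t : ℝ) : ℂ) - z)‖ := by
  set M := ⨆ t : Set.Ici (0:ℝ), ‖(((t : ℝ) : ℂ) + 1) / (((t : ℝ) : ℂ) - z)‖ with hM
  by_contra hcon
  push_neg at hcon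
  have hM0 : 0 ≤ M := sup_nonneg z hz
  have haz : 0 ≤ ‖z‖ := norm_nonneg z
  set T := M * ‖z‖ / (1 - M) with hT
  have hT0 : 0 ≤ T := div_nonneg (mul_nonneg hM0 haz) (by linarith)
  have h1 := le_sup z hz T hT0
  rw [← hM] at h1
  have hD : 0 < ‖(T:ℂ) - z‖ := lt_of_lt_of_le hz (abs_sub_ge z hz T)
  have habs : ‖((T:ℝ):ℂ) + 1‖ = 1 + T := by
    have h4 : ((T:ℂ) + 1) = ((T + 1 : ℝ) : ℂ) := by push_cast; ring
    rw [h4, Complex.norm_real, Real.norm_eq_abs, _root_.abs_of_nonneg (by linarith)]; ring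
  rw [norm_div, habs, div_le_iff₀ hD] at h1
  have hDle : ‖(T:ℂ) - z‖ ≤ T + ‖z‖ := by
    calc ‖(T:ℂ) - z‖ ≤ ‖(T:ℂ)‖ + ‖z‖ := by
          exact (norm_sub_le _ _)
      _ = T + ‖z‖ := by rw [Complex.norm_real, Real.norm_eq_abs, _root_.abs_of_nonneg hT0]
  have h1M : (1 - M) ≠ 0 := by intro h; rw [sub_eq_zero] at h; linarith
  have hTM : T * (1 - M) = M * ‖z‖ := by
    rw [hT, div_mul_cancel₀ _ h1M]
  nlinarith [mul_le_mul_of_nonneg_left hDle hM0]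

lemma key_upper (h0 : σ (Set.Iio 0) = 0)
    (hL : (∫⁻ t, ENNReal.ofReal ((1 + t)⁻¹) ∂σ) < ⊤)
    (z : ℂ) (hz : 0 < z.im) (γ : ℝ) (hγ : 0 ≤ γ) :
    ‖(γ:ℂ) + ∫ t, ((t:ℂ) - z)⁻¹ ∂σ‖ ≤
      (⨆ t : Set.Ici (0:ℝ), ‖(((t : ℝ) : ℂ) + 1) / (((t : ℝ) : ℂ) - z)‖) *
        (γ + stieltjesTotal σ) := by
  set M := ⨆ t : Set.Ici (0:ℝ), ‖(((t : ℝ) : ℂ) + 1) / (((t : ℝ) : ℂ) - z)‖ with hM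
  have hg := integrable_g h0 hL z hz
  have hS0 : 0 ≤ stieltjesTotal σ := stieltjesTotal_nonneg σ
  have hM1 : 1 ≤ M := one_le_sup z hz
  have step1 : ‖(γ:ℂ) + ∫ t, ((t:ℂ) - z)⁻¹ ∂σ‖ ≤
      γ + ‖∫ t, ((t:ℂ) - z)⁻¹ ∂σ‖ := by
    calc ‖(γ:ℂ) + ∫ t, ((t:ℂ) - z)⁻¹ ∂σ‖ ≤
        ‖(γ:ℂ)‖ + ‖∫ t, ((t:ℂ) - z)⁻¹ ∂σ‖ := norm_add_le _ _
      _ = γ + ‖∫ t, ((t:ℂ) - z)⁻¹ ∂σ‖ := by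
          rw [Complex.norm_real, Real.norm_eq_abs, _root_.abs_of_nonneg hγ]
  have step2 : ‖∫ t, ((t:ℂ) - z)⁻¹ ∂σ‖ ≤ ∫ t, ‖((t:ℂ) - z)⁻¹‖ ∂σ :=
    norm_integral_le_integral_norm _
  have step3 : ∫ t, ‖((t:ℂ) - z)⁻¹‖ ∂σ ≤ ∫ t, M * (1 + t)⁻¹ ∂σ := by
    refine integral_mono_ae hg.norm ((integrable_inv_one_add h0 hL).const_mul M) ?_
    filter_upwards [ae_nonneg h0] with t ht
    have hD : 0 < ‖(t:ℂ) - z‖ := lt_of_lt_of_le hz (abs_sub_ge z hz t)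
    have h1t : (0:ℝ) < 1 + t := by linarith
    have habs : ‖((t:ℝ):ℂ) + 1‖ = 1 + t := by
      have h4 : ((t:ℂ) + 1) = ((t + 1 : ℝ) : ℂ) := by push_cast; ring
      rw [h4, Complex.norm_real, Real.norm_eq_abs, _root_.abs_of_nonneg (by linarith)]; ring
    have hle := le_sup z hz t ht
    rw [← hM, norm_div, habs] at hle
    rw [norm_inv]
    rw [div_le_iff₀ hD] at hle
    have hMpos : (0:ℝ) < M := lt_of_lt_of_le one_pos hM1
    have h5 : (1 + t) / M ≤ ‖(t:ℂ) - z‖ := by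
      rw [div_le_iff₀ hMpos, mul_comm]; exact hle
    calc (‖(t:ℂ) - z‖)⁻¹ ≤ ((1 + t) / M)⁻¹ := inv_anti₀ (by positivity) h5
      _ = M * (1 + t)⁻¹ := by rw [inv_div, div_eq_mul_inv]
  have step4 : ∫ t, M * (1 + t)⁻¹ ∂σ = M * stieltjesTotal σ := by
    rw [integral_const_mul, integral_inv_one_add h0]
  nlinarith [step1, step2, step3, step4]

lemma key_lower {σ : Measure ℝ} (h0 : σ (Set.Iio 0) = 0)
    (hL : (∫⁻ t, ENNReal.ofReal ((1 + t)⁻¹) ∂σ) < ⊤)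
    (z : ℂ) (hz : 0 < z.im) (γ : ℝ) (hγ : 0 ≤ γ) :
    γ + stieltjesTotal σ ≤
      (‖z + 1‖ / (min (‖z‖)⁻¹ 1 * z.im)) *
        ‖(γ:ℂ) + ∫ t, ((t:ℂ) - z)⁻¹ ∂σ‖ := by
  have hg := integrable_g h0 hL z hz
  have hS0 : 0 ≤ stieltjesTotal σ := stieltjesTotal_nonneg σ
  set v : ℂ := (z.im : ℂ) + ((z.re ^ 2 + z.re + z.im ^ 2 : ℝ) : ℂ) * Complex.I with hv
  set w : ℂ := (γ:ℂ) + ∫ t, ((t:ℂ) - z)⁻¹ ∂σ with hwdef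
  have hvre : v.re = z.im := by
    rw [hv, Complex.add_re, Complex.ofReal_re, Complex.mul_re, Complex.ofReal_re,
      Complex.ofReal_im, Complex.I_re, Complex.I_im]
    ring
  have hvim : v.im = z.re ^ 2 + z.re + z.im ^ 2 := by
    rw [hv, Complex.add_im, Complex.ofReal_im, Complex.mul_im, Complex.ofReal_re,
      Complex.ofReal_im, Complex.I_re, Complex.I_im]
    ring
  -- pointwise bound on the real part
  have hpt : ∀ t : ℝ, 0 ≤ t →
      z.im * (1 + t)⁻¹ ≤ ((starRingEnd ℂ) v * ((t:ℂ) - z)⁻¹).re := by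
    intro t ht
    have hne := sub_ne z hz t
    have hd : 0 < Complex.normSq ((t:ℂ) - z) := Complex.normSq_pos.mpr hne
    have hre_eq : ((starRingEnd ℂ) v * ((t:ℂ) - z)⁻¹).re =
        (z.im * (t + z.re ^ 2 + z.im ^ 2)) / Complex.normSq ((t:ℂ) - z) := by
      rw [Complex.mul_re, Complex.inv_re, Complex.inv_im, Complex.conj_re, Complex.conj_im,
        Complex.sub_re, Complex.sub_im, Complex.ofReal_re, Complex.ofReal_im, hvre, hvim]
      field_simp
      ring
    rw [hre_eq]
    have hN : Complex.normSq ((t:ℂ) - z) = (t - z.re) ^ 2 + z.im ^ 2 := by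
      rw [Complex.normSq_apply, Complex.sub_re, Complex.sub_im, Complex.ofReal_re,
        Complex.ofReal_im]
      ring
    rw [← div_eq_mul_inv, div_le_div_iff₀ (by linarith) hd, hN]
    nlinarith [mul_nonneg (mul_nonneg hz.le ht)
      (add_nonneg (sq_nonneg (z.re + 1)) (sq_nonneg z.im))]
  -- the real part of conj v * w dominates z.im * (γ + S)
  have hvw : z.im * (γ + stieltjesTotal σ) ≤ ((starRingEnd ℂ) v * w).re := by
    have hsplit : (starRingEnd ℂ) v * w =
        (starRingEnd ℂ) v * (γ:ℂ) + (starRingEnd ℂ) v * ∫ t, ((t:ℂ) - z)⁻¹ ∂σ := by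
      rw [hwdef]; ring
    have hmulint : (starRingEnd ℂ) v * (∫ t, ((t:ℂ) - z)⁻¹ ∂σ) =
        ∫ t, (starRingEnd ℂ) v * ((t:ℂ) - z)⁻¹ ∂σ := (integral_const_mul _ _).symm
    have hFint : Integrable (fun t : ℝ => (starRingEnd ℂ) v * ((t:ℂ) - z)⁻¹) σ :=
      hg.const_mul _
    have hre_int : (∫ t, (starRingEnd ℂ) v * ((t:ℂ) - z)⁻¹ ∂σ).re =
        ∫ t, ((starRingEnd ℂ) v * ((t:ℂ) - z)⁻¹).re ∂σ := by
      have h := integral_re (𝕜 := ℂ) hFint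
      simpa using h.symm
    have hγre : ((starRingEnd ℂ) v * (γ:ℂ)).re = z.im * γ := by
      rw [Complex.mul_re, Complex.conj_re, Complex.conj_im, Complex.ofReal_re,
        Complex.ofReal_im, hvre]
      ring
    have hmono : ∫ t, z.im * (1 + t)⁻¹ ∂σ ≤
        ∫ t, ((starRingEnd ℂ) v * ((t:ℂ) - z)⁻¹).re ∂σ := by
      refine integral_mono_ae ((integrable_inv_one_add h0 hL).const_mul z.im) ?_ ?_
      · have := hFint.re
        simpa using this
      · filter_upwards [ae_nonneg h0] with t ht
        exact hpt t ht
    have hSint : ∫ t, z.im * (1 + t)⁻¹ ∂σ = z.im * stieltjesTotal σ := by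
      rw [integral_const_mul, integral_inv_one_add h0]
    rw [hsplit, Complex.add_re, hmulint, hre_int, hγre]
    rw [hSint] at hmono
    linarith
  -- |v| = |z| * |z+1|
  have hvabs : ‖v‖ ≤ ‖z‖ * ‖z + 1‖ := by
    have h2 : (‖v‖) ^ 2 = (‖z‖ * ‖z + 1‖) ^ 2 := by
      rw [mul_pow, Complex.sq_norm, Complex.sq_norm, Complex.sq_norm]
      rw [Complex.normSq_apply, Complex.normSq_apply, Complex.normSq_apply, hvre, hvim,
        Complex.add_re, Complex.add_im, Complex.one_re, Complex.one_im]
      ring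
    nlinarith [norm_nonneg v,
      mul_nonneg (norm_nonneg z) (norm_nonneg (z + 1))]
  have hW0 : 0 ≤ ‖w‖ := norm_nonneg w
  have h1 : z.im * (γ + stieltjesTotal σ) ≤
      ‖z‖ * ‖z + 1‖ * ‖w‖ := by
    calc z.im * (γ + stieltjesTotal σ) ≤ ((starRingEnd ℂ) v * w).re := hvw
      _ ≤ ‖(starRingEnd ℂ) v * w‖ := Complex.re_le_norm _
      _ = ‖v‖ * ‖w‖ := by
          rw [show ‖(starRingEnd ℂ) v * w‖ =
            ‖(starRingEnd ℂ) v‖ * ‖w‖ from norm_mul _ _,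
            Complex.norm_conj]
      _ ≤ ‖z‖ * ‖z + 1‖ * ‖w‖ :=
          mul_le_mul_of_nonneg_right hvabs hW0
  -- conclude
  have hzne : z ≠ 0 := by
    intro h; rw [h] at hz; simp at hz
  have ha : 0 < ‖z‖ := norm_pos_iff.mpr hzne
  have hm : 0 < min (‖z‖)⁻¹ 1 := lt_min (inv_pos.mpr ha) one_pos
  have hma : min (‖z‖)⁻¹ 1 * ‖z‖ ≤ 1 := by
    calc min (‖z‖)⁻¹ 1 * ‖z‖ ≤ (‖z‖)⁻¹ * ‖z‖ :=
        mul_le_mul_of_nonneg_right (min_le_left _ _) ha.le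
      _ = 1 := inv_mul_cancel₀ (ne_of_gt ha)
  rw [div_mul_eq_mul_div, le_div_iff₀ (by positivity)]
  have hAW : 0 ≤ ‖z + 1‖ * ‖w‖ :=
    mul_nonneg (norm_nonneg _) hW0
  have h2 := mul_le_mul_of_nonneg_left h1 hm.le
  have h3 := mul_le_mul_of_nonneg_right hma hAW
  nlinarith [h2, h3]


end Key

end Stielt14

theorem statement14 (n : ℕ) (hn : 0 < n) (z : Fin n → ℂ) (hz : ∀ j, 0 < (z j).im)
    (f : ℂ → ℂ) (γ : ℝ) (σ : Measure ℝ) (hrep : IsStieltjesRep f γ σ) :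
    (⨅ j : Fin n,
        (⨆ t : Set.Ici (0 : ℝ),
          ‖(((t : ℝ) : ℂ) + 1) / (((t : ℝ) : ℂ) - z j)‖)⁻¹) *
        (⨆ j : Fin n, ‖f (z j)‖) ≤ γ + stieltjesTotal σ ∧
    γ + stieltjesTotal σ ≤
      (⨅ j : Fin n,
          ‖z j + 1‖ / (min (‖z j‖)⁻¹ 1 * (z j).im)) *
        (⨆ j : Fin n, ‖f (z j)‖) := by
  haveI : Nonempty (Fin n) := Fin.pos_iff_nonempty.mp hn
  obtain ⟨hγ, h0, hL, hf⟩ := hrep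
  have hmem : ∀ j, z j ∈ SDom := by
    intro j
    intro hc
    have := (hz j).ne'
    exact this hc.2
  have hw : ∀ j, f (z j) = (γ : ℂ) + ∫ t, ((t : ℂ) - z j)⁻¹ ∂σ := fun j => hf (z j) (hmem j)
  have hS0 : 0 ≤ stieltjesTotal σ := Stielt14.stieltjesTotal_nonneg σ
  constructor
  · -- lower estimate
    obtain ⟨j1, hj1⟩ := Finite.exists_max (fun j => ‖f (z j)‖)
    have hsup : (⨆ j : Fin n, ‖f (z j)‖) = ‖f (z j1)‖ :=
      le_antisymm (ciSup_le hj1)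
        (le_ciSup (f := fun j => ‖f (z j)‖) (Finite.bddAbove_range _) j1)
    rw [hsup]
    set M := fun j : Fin n => ⨆ t : Set.Ici (0:ℝ),
      ‖(((t : ℝ) : ℂ) + 1) / (((t : ℝ) : ℂ) - z j)‖ with hMdef
    have hM1 : 1 ≤ M j1 := Stielt14.one_le_sup (z j1) (hz j1)
    have hMpos : 0 < M j1 := lt_of_lt_of_le one_pos hM1
    have habs : ‖f (z j1)‖ ≤ M j1 * (γ + stieltjesTotal σ) := by
      rw [hw j1]
      exact Stielt14.key_upper h0 hL (z j1) (hz j1) γ hγ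
    have hinf : (⨅ j : Fin n, (M j)⁻¹) ≤ (M j1)⁻¹ :=
      ciInf_le (Finite.bddBelow_range _) j1
    have hinf0 : 0 ≤ ⨅ j : Fin n, (M j)⁻¹ :=
      le_ciInf fun j => inv_nonneg.mpr (Stielt14.sup_nonneg (z j) (hz j))
    calc (⨅ j : Fin n, (M j)⁻¹) * ‖f (z j1)‖
        ≤ (M j1)⁻¹ * ‖f (z j1)‖ :=
          mul_le_mul_of_nonneg_right hinf (norm_nonneg _)
      _ ≤ (M j1)⁻¹ * (M j1 * (γ + stieltjesTotal σ)) :=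
          mul_le_mul_of_nonneg_left habs (inv_nonneg.mpr hMpos.le)
      _ = γ + stieltjesTotal σ := by
          rw [← mul_assoc, inv_mul_cancel₀ (ne_of_gt hMpos), one_mul]
  · -- upper estimate
    set C := fun j : Fin n =>
      ‖z j + 1‖ / (min (‖z j‖)⁻¹ 1 * (z j).im) with hCdef
    obtain ⟨j0, hj0⟩ := Finite.exists_min C
    have hinf : (⨅ j : Fin n, C j) = C j0 :=
      le_antisymm (ciInf_le (Finite.bddBelow_range _) j0) (le_ciInf hj0)
    rw [hinf]
    have hC0 : 0 ≤ C j0 := by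
      have ha : 0 < ‖z j0‖ := by
        apply norm_pos_iff.mpr
        intro h
        have := hz j0
        rw [h] at this
        simp at this
      have := hz j0
      positivity
    calc γ + stieltjesTotal σ ≤ C j0 * ‖f (z j0)‖ := by
          rw [hw j0]
          exact Stielt14.key_lower h0 hL (z j0) (hz j0) γ hγ
      _ ≤ C j0 * ⨆ j : Fin n, ‖f (z j)‖ :=
          mul_le_mul_of_nonneg_left
            (le_ciSup (f := fun j => ‖f (z j)‖) (Finite.bddAbove_range _) j0) hC0
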